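/- If a ∈ U(n) admits factorizations a = a₊v₊⁻¹ = a₋v₋⁻¹ with diagonal parts δ₊ = diag(a₊), δ₋ = diag(a₋), then δ₊ = (δ₋⁻¹)*, and consequently the quotients φ_j(a) = d⁺_j(a)/d⁻_{j+1}(a) of principal minors all have absolute value 1. -/

import Mathlib

/-!
Rewrite the factorizations as `a * vp = ap` and `a * vm = am`. Unitarity gives
`apᴴ * am = vpᴴ * vm`, whose left side is lower and right side upper triangular; comparing
diagonals yields `conj (ap i i) * am i i = 1`. Since `vm` is upper unitriangular, the leading
block of `a * vm` is the leading block of `a` times that of `vm`, so `d⁺_j(a)` is a product of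
diagonal entries of `am`; symmetrically `d⁻_j(a)` is a product of diagonal entries of `ap`. Hence
`|φ_j(a)| = ∏ i, |am i i| = |det a| = 1`.
-/

open Matrix

/-- Upper principal minor `d⁺_j` (1-indexed). -/
noncomputable def dplus {n : ℕ} (a : Matrix (Fin n) (Fin n) ℂ) (j : ℕ) : ℂ :=
  (a.submatrix (fun i : {i : Fin n // (i : ℕ) < j} => (i : Fin n))
    (fun i : {i : Fin n // (i : ℕ) < j} => (i : Fin n))).det

/-- Lower principal minor `d⁻_j` (1-indexed); `dminus a (n+1) = 1`. -/
noncomputable def dminus {n : ℕ} (a : Matrix (Fin n) (Fin n) ℂ) (j : ℕ) : ℂ :=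
  (a.submatrix (fun i : {i : Fin n // j ≤ (i : ℕ) + 1} => (i : Fin n))
    (fun i : {i : Fin n // j ≤ (i : ℕ) + 1} => (i : Fin n))).det

namespace Matrix

variable {m α R : Type*}

theorem BlockTriangular.mul_apply_self [LinearOrder α] [Fintype m] [NonUnitalNonAssocSemiring R]
    {M N : Matrix m m R} {b : m → α} (hb : Function.Injective b) (hM : M.BlockTriangular b)
    (hN : N.BlockTriangular b) (i : m) : (M * N) i i = M i i * N i i := by
  refine Finset.sum_eq_single i (fun k _ hk => ?_) (by simp)
  dsimp only
  rcases lt_or_gt_of_ne (hb.ne hk) with h | h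
  · rw [hM h, zero_mul]
  · rw [hN h, mul_zero]

theorem BlockTriangular.toBlock_not_eq_zero [LT α] [Zero R] {M : Matrix m m R} {b : m → α}
    (hM : M.BlockTriangular b) {p : m → Prop} (hp : ∀ i k, p i → ¬p k → b i < b k) :
    M.toBlock (fun i => ¬p i) p = 0 := by
  ext k i
  exact hM (hp i k i.2 k.2)

theorem toSquareBlockProp_mul [Fintype m] [CommRing R] (A B : Matrix m m R) (p : m → Prop)
    [DecidablePred p] (hB : B.toBlock (fun i => ¬p i) p = 0) :
    (A * B).toSquareBlockProp p = A.toSquareBlockProp p * B.toSquareBlockProp p := by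
  rw [toSquareBlockProp, toBlock_mul_eq_add p p, hB, Matrix.mul_zero, add_zero]
  rfl

theorem IsUpperTriangular.det_toSquareBlockProp [LinearOrder m] [Fintype m] [CommRing R]
    {M : Matrix m m R} (hM : M.IsUpperTriangular) (p : m → Prop) [DecidablePred p] :
    (M.toSquareBlockProp p).det = ∏ i ∈ Finset.univ.filter p, M i i := by
  rw [det_of_isUpperTriangular (M := M.toSquareBlockProp p) fun i j h => hM h]
  exact (Finset.prod_subtype _ (by simp) fun i => M i i).symm

theorem IsLowerTriangular.det_toSquareBlockProp [LinearOrder m] [Fintype m] [CommRing R]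
    {M : Matrix m m R} (hM : M.IsLowerTriangular) (p : m → Prop) [DecidablePred p] :
    (M.toSquareBlockProp p).det = ∏ i ∈ Finset.univ.filter p, M i i := by
  rw [det_of_isLowerTriangular (M.toSquareBlockProp p) fun i j h => hM h]
  exact (Finset.prod_subtype _ (by simp) fun i => M i i).symm

theorem IsUpperTriangular.conjTranspose [LT m] [AddMonoid R] [StarAddMonoid R]
    {M : Matrix m m R} (hM : M.IsUpperTriangular) : Mᴴ.IsLowerTriangular :=
  fun i j h => by rw [conjTranspose_apply, @hM j i h, star_zero]

theorem IsLowerTriangular.conjTranspose [LT m] [AddMonoid R] [StarAddMonoid R]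
    {M : Matrix m m R} (hM : M.IsLowerTriangular) : Mᴴ.IsUpperTriangular :=
  fun i j h => by rw [conjTranspose_apply, @hM j i h, star_zero]

theorem diagonal_eq_conjTranspose_inv_diagonal [Fintype m] [DecidableEq m] [CommRing R]
    [StarRing R] {d e : m → R} (h : ∀ i, star (d i) * e i = 1) :
    diagonal d = ((diagonal e)⁻¹)ᴴ := by
  rw [inv_eq_left_inv (B := diagonal (star d)), diagonal_conjTranspose, star_star]
  rw [diagonal_mul_diagonal, ← diagonal_one]
  exact congrArg diagonal (funext h)

theorem star_diag_mul_diag_eq_one_of_unitary [Fintype m] [LinearOrder m] [Semiring R] [StarRing R]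
    {a r v l w : Matrix m m R} (ha : aᴴ * a = 1) (hr : a * v = r) (hl : a * w = l)
    (hr_upper : r.IsUpperTriangular) (hv : v.IsLowerTriangular) (hv1 : ∀ i, v i i = 1)
    (hl_lower : l.IsLowerTriangular) (hw : w.IsUpperTriangular) (hw1 : ∀ i, w i i = 1) (i : m) :
    star (r i i) * l i i = 1 := by
  have hmul : rᴴ * l = vᴴ * w := by
    rw [← hr, ← hl, conjTranspose_mul, Matrix.mul_assoc, ← Matrix.mul_assoc aᴴ, ha,
      Matrix.one_mul]
  have hii := congrFun (congrFun hmul i) i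
  rwa [hr_upper.conjTranspose.mul_apply_self OrderDual.toDual.injective hl_lower,
    hv.conjTranspose.mul_apply_self Function.injective_id hw, conjTranspose_apply,
    conjTranspose_apply, hv1, hw1, star_one, one_mul] at hii

end Matrix

open Finset

theorem dplus_eq_prod_diag {n : ℕ} {a l u : Matrix (Fin n) (Fin n) ℂ} (hal : a * u = l)
    (hl : l.IsLowerTriangular) (hu : u.IsUpperTriangular) (hu1 : ∀ i, u i i = 1) (j : ℕ) :
    dplus a j = ∏ i ∈ univ.filter (fun i : Fin n => (i : ℕ) < j), l i i := by
  have hblock := congrArg det (toSquareBlockProp_mul a u (fun i : Fin n => (i : ℕ) < j)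
    (hu.toBlock_not_eq_zero fun i k hi hk => by rw [id, id, Fin.lt_def]; omega))
  rwa [hal, det_mul, hl.det_toSquareBlockProp, hu.det_toSquareBlockProp,
    prod_eq_one fun i _ => hu1 i, mul_one, eq_comm] at hblock

theorem dminus_eq_prod_diag {n : ℕ} {a r u : Matrix (Fin n) (Fin n) ℂ} (har : a * u = r)
    (hr : r.IsUpperTriangular) (hu : u.IsLowerTriangular) (hu1 : ∀ i, u i i = 1) (j : ℕ) :
    dminus a j = ∏ i ∈ univ.filter (fun i : Fin n => j ≤ (i : ℕ) + 1), r i i := by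
  have hblock := congrArg det (toSquareBlockProp_mul a u (fun i : Fin n => j ≤ (i : ℕ) + 1)
    (hu.toBlock_not_eq_zero fun i k hi hk => by
      rw [OrderDual.toDual_lt_toDual, Fin.lt_def]; omega))
  rwa [har, det_mul, hr.det_toSquareBlockProp, hu.det_toSquareBlockProp,
    prod_eq_one fun i _ => hu1 i, mul_one, eq_comm] at hblock

theorem norm_prod_div_prod_compl_eq_one {ι 𝕜 : Type*} [Fintype ι] [DecidableEq ι]
    [NormedField 𝕜] (s : Finset ι) {d e : ι → 𝕜} (hde : ∀ i, ‖e i‖ * ‖d i‖ = 1)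
    (hd : ‖∏ i, d i‖ = 1) : ‖(∏ i ∈ s, d i) / ∏ i ∈ sᶜ, e i‖ = 1 := by
  rw [norm_div, norm_prod, norm_prod, prod_congr rfl fun i _ => eq_inv_of_mul_eq_one_left (hde i),
    prod_inv_distrib, div_inv_eq_mul, prod_mul_prod_compl, ← norm_prod, hd]

theorem stmt_5_general (n : ℕ) (a ap vp am vm : Matrix (Fin n) (Fin n) ℂ)
    (hunitary : aᴴ * a = 1)
    (hap : ∀ i j : Fin n, j < i → ap i j = 0)
    (hvp : ∀ i j : Fin n, i < j → vp i j = 0) (hvp1 : ∀ i, vp i i = 1)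
    (ham : ∀ i j : Fin n, i < j → am i j = 0)
    (hvm : ∀ i j : Fin n, j < i → vm i j = 0) (hvm1 : ∀ i, vm i i = 1)
    (hfacp : a = ap * vp⁻¹) (hfacm : a = am * vm⁻¹) :
    (Matrix.diagonal fun i => ap i i) = ((Matrix.diagonal fun i => am i i)⁻¹)ᴴ ∧
    ∀ j : Fin n,
      ‖dplus a ((j : ℕ) + 1) / dminus a ((j : ℕ) + 2)‖ = 1 := by
  have hap : ap.IsUpperTriangular := fun i j h => hap i j h
  have hvp : vp.IsLowerTriangular := fun i j h => hvp i j h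
  have ham : am.IsLowerTriangular := fun i j h => ham i j h
  have hvm : vm.IsUpperTriangular := fun i j h => hvm i j h
  have hvp_det : vp.det = 1 :=
    (det_of_isLowerTriangular vp hvp).trans (prod_eq_one fun i _ => hvp1 i)
  have hvm_det : vm.det = 1 :=
    (det_of_isUpperTriangular hvm).trans (prod_eq_one fun i _ => hvm1 i)
  have hp : a * vp = ap := hfacp ▸ nonsing_inv_mul_cancel_right vp ap (hvp_det ▸ isUnit_one)
  have hm : a * vm = am := hfacm ▸ nonsing_inv_mul_cancel_right vm am (hvm_det ▸ isUnit_one)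
  have hdiag := star_diag_mul_diag_eq_one_of_unitary hunitary hp hm hap hvp hvp1 ham hvm hvm1
  refine ⟨diagonal_eq_conjTranspose_inv_diagonal hdiag, fun j => ?_⟩
  have hdet : ‖∏ i, am i i‖ = 1 := by
    rw [← det_of_isLowerTriangular am ham, ← hm, det_mul, hvm_det, mul_one]
    exact CStarRing.norm_of_mem_unitary (det_of_mem_unitary (mem_unitaryGroup_iff'.2 hunitary))
  have hcompl : univ.filter (fun i : Fin n => (j : ℕ) + 2 ≤ (i : ℕ) + 1) =
      (univ.filter fun i : Fin n => (i : ℕ) < (j : ℕ) + 1)ᶜ := by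
    ext i
    simp only [mem_filter, mem_univ, true_and, mem_compl]
    omega
  rw [dplus_eq_prod_diag hm ham hvm hvm1, dminus_eq_prod_diag hp hap hvp hvp1, hcompl]
  exact norm_prod_div_prod_compl_eq_one _ (fun i => by simpa using congrArg norm (hdiag i)) hdet

/-- for a unitary `a` with triangular factorizations,
`δ₊ = (δ₋⁻¹)*`, and all quotients `φ_j(a) = d⁺_j(a)/d⁻_{j+1}(a)` of principal
minors have absolute value one. -/
theorem stmt_5 (n : ℕ) (a ap vp am vm : Matrix (Fin n) (Fin n) ℂ)
    (hunitary : aᴴ * a = 1)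
    (hap : ∀ i j : Fin n, j < i → ap i j = 0) (hapdet : ap.det ≠ 0)
    (hvp : ∀ i j : Fin n, i < j → vp i j = 0) (hvp1 : ∀ i, vp i i = 1)
    (ham : ∀ i j : Fin n, i < j → am i j = 0) (hamdet : am.det ≠ 0)
    (hvm : ∀ i j : Fin n, j < i → vm i j = 0) (hvm1 : ∀ i, vm i i = 1)
    (hfacp : a = ap * vp⁻¹) (hfacm : a = am * vm⁻¹) :
    (Matrix.diagonal fun i => ap i i) = ((Matrix.diagonal fun i => am i i)⁻¹)ᴴ ∧
    ∀ j : Fin n,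
      ‖dplus a ((j : ℕ) + 1) / dminus a ((j : ℕ) + 2)‖ = 1 :=
  stmt_5_general n a ap vp am vm hunitary hap hvp hvp1 ham hvm hvm1 hfacp hfacm
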